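/- arXiv:1009.1104 — 2 statements merged into one kernel-verified Lean document; each statement's English description precedes it below -/
import Mathlib

section
/- Chord through the focus avoids the body: let α > 0 and 0 < γ < β, and let B₂(α,β,γ) = {(x,y) ∈ ℝ² : |y| ≤ αx² − 1/(4α), γ ≤ |x| ≤ β}. Then for every x₀ ∈ ℝ, setting p = (x₀, αx₀² − 1/(4α)), the open segment {s·p : s ∈ (−1, 1)} is disjoint from B₂(α,β,γ). -/
/-!
Write `c = 1/(4α)` and `a = αx₀²`, so `p = (x₀, a - c)` and `s • p` lies in the body only if
`|s| |a - c| ≤ s² a - c`. For `t = |s| < 1` the identity `t (a - c) - (t² a - c) = (1 - t)(t a + c)`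
makes the right side strictly smaller than `t (a - c) ≤ |s| |a - c|`, since `c > 0`.
-/

/-- The planar body `B₂(α,β,γ) = {(x,y) : |y| ≤ αx² − 1/(4α), γ ≤ |x| ≤ β}`. -/
def B2 (α β γ : ℝ) : Set (EuclideanSpace ℝ (Fin 2)) :=
  {p | |p 1| ≤ α * (p 0) ^ 2 - 1 / (4 * α) ∧ γ ≤ |p 0| ∧ |p 0| ≤ β}

lemma sq_mul_sub_lt_mul_sub {t a c : ℝ} (ht₀ : 0 ≤ t) (ht₁ : t < 1) (ha : 0 ≤ a) (hc : 0 < c) :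
    t ^ 2 * a - c < t * (a - c) := by
  have hpos : 0 < (1 - t) * (t * a + c) := mul_pos (by linarith) (by positivity)
  linarith [show t * (a - c) - (t ^ 2 * a - c) = (1 - t) * (t * a + c) by ring]

lemma sq_mul_sub_lt_abs_mul_abs_sub {s a c : ℝ} (hs : |s| < 1) (ha : 0 ≤ a) (hc : 0 < c) :
    s ^ 2 * a - c < |s| * |a - c| :=
  calc s ^ 2 * a - c = |s| ^ 2 * a - c := by rw [sq_abs]
    _ < |s| * (a - c) := sq_mul_sub_lt_mul_sub (abs_nonneg s) hs ha hc
    _ ≤ |s| * |a - c| := mul_le_mul_of_nonneg_left (le_abs_self _) (abs_nonneg s)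

theorem chord_through_focus_avoids_body_general (α β γ : ℝ) (hα : 0 < α)
    (x₀ : ℝ) :
    ∀ s ∈ Set.Ioo (-1 : ℝ) 1,
      s • (WithLp.toLp 2 ![x₀, α * x₀ ^ 2 - 1 / (4 * α)] : EuclideanSpace ℝ (Fin 2)) ∉ B2 α β γ := by
  rintro s hs ⟨hy, -⟩
  simp only [PiLp.smul_apply, Matrix.cons_val_zero, Matrix.cons_val_one, smul_eq_mul,
    abs_mul] at hy
  have key := sq_mul_sub_lt_abs_mul_abs_sub (abs_lt.mpr hs) (by positivity : 0 ≤ α * x₀ ^ 2)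
    (by positivity : (0 : ℝ) < 1 / (4 * α))
  linarith [show α * (s * x₀) ^ 2 = s ^ 2 * (α * x₀ ^ 2) by ring]

/-- Chord through the focus avoids the body: for `α > 0`, `0 < γ < β`, and any `x₀ ∈ ℝ`,
with `p = (x₀, αx₀² − 1/(4α))`, the open segment `{s • p : s ∈ (−1, 1)}` is disjoint
from `B₂(α,β,γ)`. -/
theorem chord_through_focus_avoids_body (α β γ : ℝ) (hα : 0 < α) (hγ : 0 < γ) (hγβ : γ < β)
    (x₀ : ℝ) :
    ∀ s ∈ Set.Ioo (-1 : ℝ) 1,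
      s • (WithLp.toLp 2 ![x₀, α * x₀ ^ 2 - 1 / (4 * α)] : EuclideanSpace ℝ (Fin 2)) ∉ B2 α β γ :=
  chord_through_focus_avoids_body_general α β γ hα x₀
end

section
/- Zero resistance of the planar body in the direction (0,−1), per-particle form: let α > 0, 0 < γ < β with 2αβ > 1, and let x₀ satisfy max(γ, 1/(2α)) ≤ |x₀| ≤ β. Put y₀ = αx₀² − 1/(4α) ≥ 0 and p = (x₀, y₀). Then: (i) p ∈ B₂(α,β,γ), and no point (x₀, y) with y > y₀ lies in B₂(α,β,γ) (so a particle moving with velocity (0,−1) along the vertical line x = x₀ first hits the body at p); (ii) the billiard reflection of (0,−1) at p with unit normal (−2αx₀, 1)/√(1+4α²x₀²) equals −p/‖p‖; (iii) the open segment {s·p : s ∈ (−1,1)} is disjoint from B₂(α,β,γ), and −p ∈ B₂(α,β,γ); (iv) the billiard reflection of −p/‖p‖ at −p with unit normal (2αx₀, −1)/√(1+4α²x₀²) equals (0,−1); (v) no point (−x₀, y) with y < −y₀ lies in B₂(α,β,γ). Consequently, the particle makes exactly two reflections and its final velocity equals its initial velocity (0,−1), exiting along the vertical line x = −x₀. 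-/
/-!
The upper boundary `y = αx² − 1/(4α)` of `B₂(α,β,γ)` is a parabola with focus at the origin, so
a vertical ray hitting it at `p` is reflected towards the origin; the chord from `p` through the
focus to `−p` clears the body because the parabola is convex and passes below the focus. The body
is symmetric under `q ↦ −q` and the normal at `−p` is the negative of the normal at `p`, so the
second reflection is the inverse of the first and the particle leaves with velocity `(0,−1)`.
-/

open scoped RealInnerProductSpace

local notation "ℝ²" => EuclideanSpace ℝ (Fin 2)

section BilliardReflection

variable {E : Type*} [NormedAddCommGroup E] [InnerProductSpace ℝ E]

def billiardReflection (n v : E) : E := v - (2 * ⟪v, n⟫) • n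

theorem billiardReflection_neg_normal (n v : E) :
    billiardReflection (-n) v = billiardReflection n v := by
  simp [billiardReflection]

theorem billiardReflection_involutive {n : E} (hn : ‖n‖ = 1) :
    Function.Involutive (billiardReflection n) := by
  intro v
  have hnn : ⟪n, n⟫ = 1 := by rw [real_inner_self_eq_norm_sq, hn, one_pow]
  simp only [billiardReflection, inner_sub_left, real_inner_smul_left, hnn]
  module

theorem billiardReflection_inv_norm_smul (m v : E) :
    billiardReflection (‖m‖⁻¹ • m) v = v - (2 * ⟪v, m⟫ / ‖m‖ ^ 2) • m := by
  rw [billiardReflection, real_inner_smul_right, smul_smul]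
  congr 2
  ring

end BilliardReflection

section Vec2

theorem neg_vec2 (x y : ℝ) : -(!₂[x, y] : ℝ²) = !₂[-x, -y] := by
  rw [← WithLp.toLp_neg]
  simp

theorem smul_vec2 (t x y : ℝ) : t • (!₂[x, y] : ℝ²) = !₂[t * x, t * y] := by
  rw [← WithLp.toLp_smul]
  simp

theorem norm_vec2 (x y : ℝ) : ‖(!₂[x, y] : ℝ²)‖ = √(x ^ 2 + y ^ 2) := by
  simp [EuclideanSpace.norm_eq, Fin.sum_univ_two]

theorem inner_vec2 (a b c d : ℝ) : ⟪(!₂[a, b] : ℝ²), !₂[c, d]⟫ = a * c + b * d := by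
  simp only [EuclideanSpace.inner_eq_star_dotProduct, star_trivial, Matrix.dotProduct_cons,
    Matrix.head_cons, Matrix.tail_cons, Matrix.dotProduct_of_isEmpty, add_zero]
  ring

end Vec2

section Parabola

variable {α : ℝ}

theorem parabola_nonneg (hα : 0 < α) {x : ℝ} (hx : 1 / (2 * α) ≤ |x|) :
    0 ≤ α * x ^ 2 - 1 / (4 * α) := by
  have hx' : 1 ≤ 2 * α * |x| := by rwa [div_le_iff₀ (by positivity), mul_comm] at hx
  rw [sub_nonneg, div_le_iff₀ (by positivity), ← sq_abs x]
  nlinarith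

/-- The focal property: the distance from the origin equals the distance to the directrix
`y = −1/(2α)`. -/
theorem norm_parabola_point (hα : 0 < α) (x : ℝ) :
    ‖(!₂[x, α * x ^ 2 - 1 / (4 * α)] : ℝ²)‖ = α * x ^ 2 + 1 / (4 * α) := by
  have hsq : x ^ 2 + (α * x ^ 2 - 1 / (4 * α)) ^ 2 = (α * x ^ 2 + 1 / (4 * α)) ^ 2 := by
    field_simp
    ring
  rw [norm_vec2, hsq, Real.sqrt_sq (by positivity)]

/-- Convexity of the parabola together with its value `−1/(4α) < 0` at `0`; the gap is
`(1 − |t|)(αx²|t| + 1/(4α))`. -/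
theorem parabola_smul_lt (hα : 0 < α) {t : ℝ} (ht : |t| < 1) (x : ℝ) :
    α * (t * x) ^ 2 - 1 / (4 * α) < |t| * (α * x ^ 2 - 1 / (4 * α)) := by
  have hgap : 0 < (1 - |t|) * (α * x ^ 2 * |t| + 1 / (4 * α)) := by
    apply mul_pos (by linarith)
    positivity
  rw [mul_pow, ← sq_abs t]
  nlinarith [hgap]

theorem billiardReflection_parabola (hα : 0 < α) (x : ℝ) :
    billiardReflection (‖(!₂[-(2 * α * x), 1] : ℝ²)‖⁻¹ • !₂[-(2 * α * x), 1]) !₂[0, -1] =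
      -(‖(!₂[x, α * x ^ 2 - 1 / (4 * α)] : ℝ²)‖⁻¹ • !₂[x, α * x ^ 2 - 1 / (4 * α)]) := by
  rw [billiardReflection_inv_norm_smul, norm_parabola_point hα, norm_vec2,
    Real.sq_sqrt (by positivity), inner_vec2]
  ext i
  fin_cases i <;>
    simp only [Fin.zero_eta, Fin.mk_one, PiLp.sub_apply, PiLp.smul_apply, PiLp.neg_apply,
      Matrix.cons_val_zero, Matrix.cons_val_one, Matrix.cons_val_fin_one, smul_eq_mul] <;>
    field_simp <;> ring

end Parabola

section Body

variable {α β γ : ℝ}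

theorem mem_B2_iff {x y : ℝ} :
    !₂[x, y] ∈ B2 α β γ ↔ |y| ≤ α * x ^ 2 - 1 / (4 * α) ∧ γ ≤ |x| ∧ |x| ≤ β :=
  Iff.rfl

theorem neg_mem_B2_iff {q : ℝ²} : -q ∈ B2 α β γ ↔ q ∈ B2 α β γ := by
  simp [B2]

theorem notMem_B2_of_lt_abs {x y : ℝ} (h : α * x ^ 2 - 1 / (4 * α) < |y|) :
    !₂[x, y] ∉ B2 α β γ :=
  fun hmem => (mem_B2_iff.1 hmem).1.not_gt h

theorem parabola_point_mem_B2 {x : ℝ} (hy : 0 ≤ α * x ^ 2 - 1 / (4 * α)) (hγ : γ ≤ |x|)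
    (hβ : |x| ≤ β) : !₂[x, α * x ^ 2 - 1 / (4 * α)] ∈ B2 α β γ :=
  mem_B2_iff.2 ⟨(abs_of_nonneg hy).le, hγ, hβ⟩

theorem smul_parabola_point_notMem_B2 (hα : 0 < α) {t : ℝ} (ht : |t| < 1) (x : ℝ) :
    t • !₂[x, α * x ^ 2 - 1 / (4 * α)] ∉ B2 α β γ := by
  rw [smul_vec2]
  refine notMem_B2_of_lt_abs ((parabola_smul_lt hα ht x).trans_le ?_)
  rw [abs_mul]
  exact mul_le_mul_of_nonneg_left (le_abs_self _) (abs_nonneg t)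

end Body

theorem planar_zero_resistance_general (α β γ x₀ : ℝ) (hα : 0 < α)
    (hx₀l : max γ (1 / (2 * α)) ≤ |x₀|) (hx₀r : |x₀| ≤ β)
    (y₀ : ℝ) (hy₀ : y₀ = α * x₀ ^ 2 - 1 / (4 * α))
    (p v n₁ n₂ : EuclideanSpace ℝ (Fin 2))
    (hp : p = !₂[x₀, y₀]) (hv : v = !₂[0, -1])
    (hn₁ : n₁ = (Real.sqrt (1 + 4 * α ^ 2 * x₀ ^ 2))⁻¹ •
      (!₂[-(2 * α * x₀), 1] : EuclideanSpace ℝ (Fin 2)))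
    (hn₂ : n₂ = (Real.sqrt (1 + 4 * α ^ 2 * x₀ ^ 2))⁻¹ •
      (!₂[2 * α * x₀, -1] : EuclideanSpace ℝ (Fin 2))) :
    -- (i) `p` is the first hitting point of the downward particle on the line `x = x₀`
    (p ∈ B2 α β γ ∧ ∀ y : ℝ, y > y₀ → (!₂[x₀, y] : EuclideanSpace ℝ (Fin 2)) ∉ B2 α β γ) ∧
    -- (ii) reflection at `p` sends `(0,−1)` to `−p/‖p‖`
    v - (2 * ⟪v, n₁⟫) • n₁ = -(‖p‖⁻¹ • p) ∧
    -- (iii) the chord through the focus avoids the body, and `−p` belongs to the body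
    ((∀ s ∈ Set.Ioo (-1 : ℝ) 1, s • p ∉ B2 α β γ) ∧ -p ∈ B2 α β γ) ∧
    -- (iv) reflection at `−p` sends `−p/‖p‖` back to `(0,−1)`
    (-(‖p‖⁻¹ • p)) - (2 * ⟪-(‖p‖⁻¹ • p), n₂⟫) • n₂ = v ∧
    -- (v) the outgoing vertical ray along `x = −x₀` avoids the body
    (∀ y : ℝ, y < -y₀ → (!₂[-x₀, y] : EuclideanSpace ℝ (Fin 2)) ∉ B2 α β γ) := by
  subst hy₀ hp hv
  set m : ℝ² := !₂[-(2 * α * x₀), 1] with hm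
  have hm_norm : √(1 + 4 * α ^ 2 * x₀ ^ 2) = ‖m‖ := by
    rw [hm, norm_vec2]
    congr 1
    ring
  rw [hm_norm] at hn₁ hn₂
  have hn₂_eq : n₂ = -n₁ := by
    rw [hn₁, hn₂, ← smul_neg, hm, neg_vec2, neg_neg]
  have hm_ne : m ≠ 0 := by
    rw [← norm_pos_iff, ← hm_norm]
    positivity
  have hn₁_unit : ‖n₁‖ = 1 := hn₁ ▸ norm_smul_inv_norm (𝕜 := ℝ) hm_ne
  have hreflect : billiardReflection n₁ !₂[0, -1] = _ := hn₁ ▸ billiardReflection_parabola hα x₀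
  have hp_mem := parabola_point_mem_B2 (β := β) (parabola_nonneg hα (le_of_max_le_right hx₀l))
    (le_of_max_le_left hx₀l) hx₀r
  have above : ∀ y > α * x₀ ^ 2 - 1 / (4 * α), !₂[x₀, y] ∉ B2 α β γ :=
    fun y hy => notMem_B2_of_lt_abs (hy.trans_le (le_abs_self y))
  refine ⟨⟨hp_mem, above⟩, hreflect,
    ⟨fun s hs => smul_parabola_point_notMem_B2 hα (abs_lt.2 hs) x₀, neg_mem_B2_iff.2 hp_mem⟩,
    ?_, fun y hy => ?_⟩
  · change billiardReflection n₂ _ = _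
    rw [hn₂_eq, billiardReflection_neg_normal, ← hreflect, billiardReflection_involutive hn₁_unit]
  · rw [← neg_neg y, ← neg_vec2, neg_mem_B2_iff]
    exact above (-y) (by linarith)

/-- Zero resistance of the planar body in the direction `(0,−1)`, per-particle form:
the particle entering along `x = x₀` first hits the body at `p = (x₀, y₀)`, reflects
toward the focus, crosses to `−p`, reflects again, and exits vertically along `x = −x₀`
with the original velocity `(0,−1)`. -/
theorem planar_zero_resistance (α β γ x₀ : ℝ) (hα : 0 < α) (hγ : 0 < γ) (hγβ : γ < β)
    (hβ : 2 * α * β > 1) (hx₀l : max γ (1 / (2 * α)) ≤ |x₀|) (hx₀r : |x₀| ≤ β)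
    (y₀ : ℝ) (hy₀ : y₀ = α * x₀ ^ 2 - 1 / (4 * α))
    (p v n₁ n₂ : EuclideanSpace ℝ (Fin 2))
    (hp : p = !₂[x₀, y₀]) (hv : v = !₂[0, -1])
    (hn₁ : n₁ = (Real.sqrt (1 + 4 * α ^ 2 * x₀ ^ 2))⁻¹ •
      (!₂[-(2 * α * x₀), 1] : EuclideanSpace ℝ (Fin 2)))
    (hn₂ : n₂ = (Real.sqrt (1 + 4 * α ^ 2 * x₀ ^ 2))⁻¹ •
      (!₂[2 * α * x₀, -1] : EuclideanSpace ℝ (Fin 2))) :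
    -- (i) `p` is the first hitting point of the downward particle on the line `x = x₀`
    (p ∈ B2 α β γ ∧ ∀ y : ℝ, y > y₀ → (!₂[x₀, y] : EuclideanSpace ℝ (Fin 2)) ∉ B2 α β γ) ∧
    -- (ii) reflection at `p` sends `(0,−1)` to `−p/‖p‖`
    v - (2 * ⟪v, n₁⟫) • n₁ = -(‖p‖⁻¹ • p) ∧
    -- (iii) the chord through the focus avoids the body, and `−p` belongs to the body
    ((∀ s ∈ Set.Ioo (-1 : ℝ) 1, s • p ∉ B2 α β γ) ∧ -p ∈ B2 α β γ) ∧
    -- (iv) reflection at `−p` sends `−p/‖p‖` back to `(0,−1)`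
    (-(‖p‖⁻¹ • p)) - (2 * ⟪-(‖p‖⁻¹ • p), n₂⟫) • n₂ = v ∧
    -- (v) the outgoing vertical ray along `x = −x₀` avoids the body
    (∀ y : ℝ, y < -y₀ → (!₂[-x₀, y] : EuclideanSpace ℝ (Fin 2)) ∉ B2 α β γ) :=
  planar_zero_resistance_general α β γ x₀ hα hx₀l hx₀r y₀ hy₀ p v n₁ n₂ hp hv hn₁ hn₂
end
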